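/- Let c be a phase matrix and T a state matrix. For s, t ∈ ℕ define h_{s,t} : [0,2π) → ℂ by h_{s,t}(θ) := Σ_{n=0}^{s} Σ_{m=0}^{t} T(m,n)·c(n,m)·e^{i(n−m)θ}. Then the double sequence (h_{s,t}) converges in the norm of L¹([0,2π), (2π)⁻¹dθ) as s, t → ∞ to a function g ∈ L¹([0,2π)), and for every Borel set X ⊆ [0,2π): (2π)⁻¹ ∫_X g(θ) dθ = lim_{s,t→∞} Σ_{n=0}^{s} Σ_{m=0}^{t} T(m,n)·c(n,m)·i_{n−m}(X). -/

import Mathlib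

open scoped ComplexConjugate ComplexOrder
open MeasureTheory Filter

noncomputable section

def IsPosSemidef (c : ℕ × ℕ → ℂ) : Prop :=
  ∀ f : ℕ →₀ ℂ, 0 ≤ ∑ n ∈ f.support, ∑ m ∈ f.support, conj (f n) * c (n, m) * f m

def IsPhaseMatrix (c : ℕ × ℕ → ℂ) : Prop :=
  (∀ n, c (n, n) = 1) ∧ IsPosSemidef c

def IsStateMatrix (T : ℕ × ℕ → ℂ) : Prop :=
  IsPosSemidef T ∧ HasSum (fun n => T (n, n)) 1

/-- `i_k(X) = (2π)⁻¹ ∫_X e^{ikθ} dθ`. -/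
def ik (k : ℤ) (X : Set ℝ) : ℂ :=
  (2 * Real.pi)⁻¹ * ∫ θ in X, Complex.exp (Complex.I * k * θ)

/-- The normalized Lebesgue measure `(2π)⁻¹ dθ` on `[0, 2π)`. -/
def mu : Measure ℝ :=
  (ENNReal.ofReal (2 * Real.pi)⁻¹) • (volume.restrict (Set.Ico 0 (2 * Real.pi)))

/-- The partial sum `Σ_{n=0}^{s} Σ_{m=0}^{t} T(m,n)·c(n,m)·e^{i(n−m)θ}`. -/
def hpart (c T : ℕ × ℕ → ℂ) (s t : ℕ) (θ : ℝ) : ℂ :=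
  ∑ n ∈ Finset.range (s + 1), ∑ m ∈ Finset.range (t + 1),
    T (m, n) * c (n, m) * Complex.exp (Complex.I * (((n : ℤ) - m : ℤ) : ℂ) * θ)

variable {A : ℕ × ℕ → ℂ}

lemma psd_finset (hA : IsPosSemidef A) (S : Finset ℕ) (x : ℕ → ℂ) :
    0 ≤ ∑ n ∈ S, ∑ m ∈ S, conj (x n) * A (n, m) * x m := by
  classical
  set f : ℕ →₀ ℂ := Finsupp.indicator S (fun n _ => x n) with hf
  have hsupp : f.support ⊆ S := Finsupp.support_indicator_subset _ _
  have hval : ∀ n ∈ S, f n = x n := fun n hn => Finsupp.indicator_of_mem hn _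
  have h1 : ∑ n ∈ f.support, ∑ m ∈ f.support, conj (f n) * A (n, m) * f m
      = ∑ n ∈ S, ∑ m ∈ S, conj (x n) * A (n, m) * x m := by
    rw [Finset.sum_subset hsupp, Finset.sum_congr rfl]
    · intro n hn
      rw [Finset.sum_subset hsupp, Finset.sum_congr rfl]
      · intro m hm; rw [hval n hn, hval m hm]
      · intro m _ hm
        have : f m = 0 := Finsupp.notMem_support_iff.mp hm
        simp [this]
    · intro n _ hn
      have : f n = 0 := Finsupp.notMem_support_iff.mp hn
      simp [this]
  rw [← h1]; exact hA f

lemma psd_diag (hA : IsPosSemidef A) (n : ℕ) : 0 ≤ A (n, n) := by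
  have := psd_finset hA {n} (fun _ => 1)
  simpa using this

lemma psd_herm (hA : IsPosSemidef A) (n m : ℕ) : A (m, n) = conj (A (n, m)) := by
  classical
  rcases eq_or_ne n m with rfl | hnm
  · have h := psd_diag hA n
    have him : (A (n, n)).im = 0 := by
      have := h.2; simpa using this.symm
    exact (Complex.conj_eq_iff_im.mpr him).symm
  · have h1 := psd_finset hA {n, m} (fun _ => 1)
    have h2 := psd_finset hA {n, m} (fun k => if k = n then 1 else Complex.I)
    rw [Finset.sum_pair hnm] at h1 h2
    rw [Finset.sum_pair hnm, Finset.sum_pair hnm] at h1 h2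
    have i1 := (Complex.le_def.mp h1).2.symm
    have i2 := (Complex.le_def.mp h2).2.symm
    have dn := (Complex.le_def.mp (psd_diag hA n)).2.symm
    have dm := (Complex.le_def.mp (psd_diag hA m)).2.symm
    simp [hnm, Ne.symm hnm, Complex.ext_iff] at i1 i2 dn dm
    simp only [Complex.ext_iff, Complex.conj_re, Complex.conj_im]
    constructor <;> nlinarith [i1, i2, dn, dm]

lemma psd_matrix (hA : IsPosSemidef A) (N : ℕ) :
    (Matrix.of fun i j : Fin N => A (i, j)).PosSemidef := by
  rw [Matrix.posSemidef_iff_dotProduct_mulVec]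
  constructor
  · ext i j
    simp only [Matrix.conjTranspose_apply, Matrix.of_apply, RCLike.star_def]
    exact (psd_herm hA j i).symm
  · intro x
    set x' : ℕ → ℂ := fun n => if h : n < N then x ⟨n, h⟩ else 0 with hx'
    have key := psd_finset hA (Finset.range N) x'
    have heq : dotProduct (star x) (Matrix.mulVec (Matrix.of fun i j : Fin N => A (i, j)) x)
        = ∑ n ∈ Finset.range N, ∑ m ∈ Finset.range N, conj (x' n) * A (n, m) * x' m := by
      rw [← Fin.sum_univ_eq_sum_range]
      simp only [dotProduct, Matrix.mulVec, Matrix.of_apply, Pi.star_apply]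
      refine Finset.sum_congr rfl fun i _ => ?_
      rw [← Fin.sum_univ_eq_sum_range, Finset.mul_sum]
      refine Finset.sum_congr rfl fun j _ => ?_
      have h1 : x' (i : ℕ) = x i := by simp [hx']
      have h2 : x' (j : ℕ) = x j := by simp [hx']
      rw [h1, h2, RCLike.star_def]
      ring
    exact heq ▸ key

lemma psd_gram (hA : IsPosSemidef A) (N : ℕ) :
    ∃ B : Matrix (Fin N) (Fin N) ℂ, ∀ i j : Fin N,
      A (i, j) = ∑ a, conj (B a i) * B a j := by
  obtain ⟨B, hB⟩ : ∃ B : Matrix (Fin N) (Fin N) ℂ,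
      (Matrix.of fun i j : Fin N => A (i, j)) = B.conjTranspose * B := by
    open scoped MatrixOrder Matrix.Norms.L2Operator in
    exact CStarAlgebra.nonneg_iff_eq_star_mul_self.mp
      (Matrix.nonneg_iff_posSemidef.mpr (psd_matrix hA N))
  refine ⟨B, fun i j => ?_⟩
  have : (Matrix.of fun i j : Fin N => A (i, j)) i j = (B.conjTranspose * B) i j := by rw [hB]
  simpa [Matrix.mul_apply, Matrix.conjTranspose_apply, RCLike.star_def] using this

lemma contIntegrableIco {E : Type*} [NormedAddCommGroup E] {f : ℝ → E}
    (hf : Continuous f) : IntegrableOn f (Set.Ico 0 (2 * Real.pi)) volume :=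
  (hf.integrableOn_Icc).mono_set Set.Ico_subset_Icc_self

lemma orth (k : ℤ) : ∫ θ in Set.Ico 0 (2 * Real.pi),
    Complex.exp (Complex.I * (k : ℂ) * (θ : ℝ)) =
    if k = 0 then ((2 * Real.pi : ℝ) : ℂ) else 0 := by
  have h0 : (0:ℝ) ≤ 2 * Real.pi := by positivity
  rw [MeasureTheory.integral_Ico_eq_integral_Ioo,
    ← MeasureTheory.integral_Ioc_eq_integral_Ioo, ← intervalIntegral.integral_of_le h0]
  rcases eq_or_ne k 0 with rfl | hk
  · simp
  · rw [if_neg hk]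
    have hc : Complex.I * (k : ℂ) ≠ 0 := by
      simp [Complex.I_ne_zero, Complex.ext_iff, hk]
    have := integral_exp_mul_complex (a := 0) (b := 2 * Real.pi) hc
    simp only [mul_assoc] at this ⊢
    rw [this]
    have : Complex.exp (Complex.I * ((k : ℂ) * (2 * Real.pi))) = 1 := by
      rw [show Complex.I * ((k : ℂ) * (2 * Real.pi)) = (k : ℂ) * (2 * Real.pi * Complex.I) by
        push_cast; ring]
      exact Complex.exp_int_mul_two_pi_mul_I k
    simp [this]

lemma gram_prod {T c : ℕ × ℕ → ℂ} (hT : IsPosSemidef T) (hc : IsPosSemidef c) (N : ℕ) :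
    ∃ D : (Fin N × Fin N) → Fin N → ℂ, ∀ i j : Fin N,
      T ((j : ℕ), (i : ℕ)) * c ((i : ℕ), (j : ℕ)) = ∑ k, conj (D k i) * D k j := by
  obtain ⟨Bt, hBt⟩ := psd_gram hT N
  obtain ⟨Bc, hBc⟩ := psd_gram hc N
  refine ⟨fun k n => conj (Bt k.1 n) * Bc k.2 n, fun i j => ?_⟩
  rw [hBt j i, hBc i j, Fintype.sum_prod_type, Finset.sum_mul_sum]
  refine Finset.sum_congr rfl fun a _ => Finset.sum_congr rfl fun b _ => ?_
  simp only [map_mul, RingHom.id_apply, RingHomCompTriple.comp_apply, Complex.conj_conj]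
  ring

section key

variable {A : ℕ × ℕ → ℂ}

/-- Pointwise expansion of the double sum through a Gram representation. -/
lemma gram_expand {N : ℕ} {ι : Type*} [Fintype ι] {E : ι → ℕ → ℂ}
    (hAE : ∀ n < N, ∀ m < N, A (n, m) = ∑ k, conj (E k n) * E k m)
    {S M : Finset ℕ} (hS : ∀ n ∈ S, n < N) (hM : ∀ m ∈ M, m < N) (θ : ℝ) :
    ∑ n ∈ S, ∑ m ∈ M, A (n, m) *
        Complex.exp (Complex.I * (((n : ℤ) - (m : ℤ) : ℤ) : ℂ) * θ)
      = ∑ k, conj (∑ n ∈ S, E k n * Complex.exp (-(Complex.I * n * θ)))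
          * (∑ m ∈ M, E k m * Complex.exp (-(Complex.I * m * θ))) := by
  have h1 : ∀ k : ι, conj (∑ n ∈ S, E k n * Complex.exp (-(Complex.I * n * θ)))
      * (∑ m ∈ M, E k m * Complex.exp (-(Complex.I * m * θ)))
      = ∑ n ∈ S, ∑ m ∈ M, (conj (E k n) * Complex.exp (Complex.I * n * θ))
          * (E k m * Complex.exp (-(Complex.I * m * θ))) := by
    intro k
    simp only [map_sum]
    rw [Finset.sum_mul_sum]
    refine Finset.sum_congr rfl fun n _ => Finset.sum_congr rfl fun m _ => ?_
    rw [map_mul]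
    congr 1
    rw [← Complex.exp_conj]
    congr 1
    simp [Complex.ext_iff]
  simp_rw [h1]
  conv_rhs => rw [Finset.sum_comm]
  refine Finset.sum_congr rfl fun n hn => ?_
  conv_rhs => rw [Finset.sum_comm]
  refine Finset.sum_congr rfl fun m hm => ?_
  rw [hAE n (hS n hn) m (hM m hm), Finset.sum_mul]
  refine Finset.sum_congr rfl fun k _ => ?_
  rw [show Complex.I * (((n : ℤ) - (m : ℤ) : ℤ) : ℂ) * θ
      = Complex.I * n * θ + -(Complex.I * m * θ) by push_cast; ring, Complex.exp_add]
  ring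

lemma gram_diag_integral {N : ℕ} {ι : Type*} [Fintype ι] {E : ι → ℕ → ℂ}
    (hAE : ∀ n < N, ∀ m < N, A (n, m) = ∑ k, conj (E k n) * E k m)
    {S : Finset ℕ} (hS : ∀ n ∈ S, n < N) :
    ∫ θ in Set.Ico 0 (2 * Real.pi),
        (∑ k, ‖∑ n ∈ S, E k n * Complex.exp (-(Complex.I * n * θ))‖ ^ 2)
      = 2 * Real.pi * ∑ n ∈ S, (A (n, n)).re := by
  have hcast : ∀ θ : ℝ,
      ((∑ k, ‖∑ n ∈ S, E k n * Complex.exp (-(Complex.I * n * θ))‖ ^ 2 : ℝ) : ℂ)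
      = ∑ n ∈ S, ∑ m ∈ S,
          A (n, m) * Complex.exp (Complex.I * (((n : ℤ) - (m : ℤ) : ℤ) : ℂ) * θ) := by
    intro θ
    rw [gram_expand hAE hS hS θ]
    push_cast
    refine Finset.sum_congr rfl fun k _ => ?_
    rw [← Complex.normSq_eq_conj_mul_self]
    rw [Complex.normSq_eq_norm_sq]
    norm_cast
  have hint : ∀ (n m : ℕ), IntegrableOn (fun θ : ℝ =>
      A (n, m) * Complex.exp (Complex.I * (((n : ℤ) - (m : ℤ) : ℤ) : ℂ) * θ))
      (Set.Ico 0 (2 * Real.pi)) volume := by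
    intro n m
    exact contIntegrableIco (by fun_prop)
  have hGint : (∫ θ in Set.Ico 0 (2 * Real.pi), ∑ n ∈ S, ∑ m ∈ S,
        A (n, m) * Complex.exp (Complex.I * (((n : ℤ) - (m : ℤ) : ℤ) : ℂ) * θ))
      = ((2 * Real.pi : ℝ) : ℂ) * ∑ n ∈ S, A (n, n) := by
    rw [MeasureTheory.integral_finset_sum _
      (fun n _ => MeasureTheory.integrable_finset_sum _ (fun m _ => hint n m))]
    rw [Finset.mul_sum]
    refine Finset.sum_congr rfl fun n hn => ?_
    rw [MeasureTheory.integral_finset_sum _ (fun m _ => hint n m)]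
    rw [Finset.sum_eq_single_of_mem n hn]
    · rw [MeasureTheory.integral_const_mul, orth]
      simp [mul_comm]
    · intro m _ hm
      have hne : ((n : ℤ) - (m : ℤ)) ≠ 0 :=
        sub_ne_zero.mpr (by exact_mod_cast Ne.symm hm)
      rw [MeasureTheory.integral_const_mul, orth, if_neg hne, mul_zero]
  have h2 : ((∫ θ in Set.Ico 0 (2 * Real.pi),
      (∑ k, ‖∑ n ∈ S, E k n * Complex.exp (-(Complex.I * n * θ))‖ ^ 2) : ℝ) : ℂ)
      = ((2 * Real.pi : ℝ) : ℂ) * ∑ n ∈ S, A (n, n) := by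
    refine ((Complex.ofRealLI.integral_comp_comm _).symm).trans ?_
    refine (MeasureTheory.integral_congr_ae (Eventually.of_forall (fun θ => ?_))).trans hGint
    exact hcast θ
  have h3 := congrArg Complex.re h2
  rw [Complex.ofReal_re] at h3
  rw [h3]
  simp [Complex.re_sum, Finset.mul_sum]

lemma keyL1
    (hg : ∀ N : ℕ, ∃ D : (Fin N × Fin N) → Fin N → ℂ, ∀ i j : Fin N,
      A ((i : ℕ), (j : ℕ)) = ∑ k, conj (D k i) * D k j)
    (S M : Finset ℕ) (r : ℝ) (hr : 0 < r) :
    ∫ θ in Set.Ico 0 (2 * Real.pi),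
        ‖∑ n ∈ S, ∑ m ∈ M, A (n, m) *
          Complex.exp (Complex.I * (((n : ℤ) - (m : ℤ) : ℤ) : ℂ) * θ)‖
      ≤ Real.pi * (r ^ 2 * ∑ n ∈ S, (A (n, n)).re + r⁻¹ ^ 2 * ∑ m ∈ M, (A (m, m)).re) := by
  set N := (S ∪ M).sup id + 1 with hN
  have hSN : ∀ n ∈ S, n < N :=
    fun n hn => Nat.lt_succ_of_le (Finset.le_sup (f := id) (Finset.mem_union_left _ hn))
  have hMN : ∀ m ∈ M, m < N :=
    fun m hm => Nat.lt_succ_of_le (Finset.le_sup (f := id) (Finset.mem_union_right _ hm))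
  obtain ⟨D, hD⟩ := hg N
  set E : (Fin N × Fin N) → ℕ → ℂ := fun k n => if h : n < N then D k ⟨n, h⟩ else 0 with hE
  have hAE : ∀ n < N, ∀ m < N, A (n, m) = ∑ k, conj (E k n) * E k m := by
    intro n hn m hm
    have h := hD ⟨n, hn⟩ ⟨m, hm⟩
    simpa [hE, dif_pos hn, dif_pos hm] using h
  have hpt : ∀ θ : ℝ,
      ‖∑ n ∈ S, ∑ m ∈ M, A (n, m) *
          Complex.exp (Complex.I * (((n : ℤ) - (m : ℤ) : ℤ) : ℂ) * θ)‖
      ≤ r ^ 2 / 2 * (∑ k, ‖∑ n ∈ S, E k n * Complex.exp (-(Complex.I * n * θ))‖ ^ 2)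
        + r⁻¹ ^ 2 / 2 * (∑ k, ‖∑ m ∈ M, E k m * Complex.exp (-(Complex.I * m * θ))‖ ^ 2) := by
    intro θ
    rw [gram_expand hAE hSN hMN θ]
    calc ‖∑ k, conj (∑ n ∈ S, E k n * Complex.exp (-(Complex.I * n * θ)))
            * (∑ m ∈ M, E k m * Complex.exp (-(Complex.I * m * θ)))‖
        ≤ ∑ k, ‖conj (∑ n ∈ S, E k n * Complex.exp (-(Complex.I * n * θ)))
            * (∑ m ∈ M, E k m * Complex.exp (-(Complex.I * m * θ)))‖ := norm_sum_le _ _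
      _ ≤ ∑ k, (r ^ 2 / 2 * ‖∑ n ∈ S, E k n * Complex.exp (-(Complex.I * n * θ))‖ ^ 2
            + r⁻¹ ^ 2 / 2 * ‖∑ m ∈ M, E k m * Complex.exp (-(Complex.I * m * θ))‖ ^ 2) := by
          refine Finset.sum_le_sum fun k _ => ?_
          rw [norm_mul, RCLike.norm_conj]
          set a := ‖∑ n ∈ S, E k n * Complex.exp (-(Complex.I * n * θ))‖
          set b := ‖∑ m ∈ M, E k m * Complex.exp (-(Complex.I * m * θ))‖
          have ha : 0 ≤ a := norm_nonneg _
          have hb : 0 ≤ b := norm_nonneg _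
          have h1 : r * r⁻¹ = 1 := mul_inv_cancel₀ hr.ne'
          have h2 : (r * a) * (r⁻¹ * b) = a * b := by
            calc (r * a) * (r⁻¹ * b) = (r * r⁻¹) * (a * b) := by ring
              _ = a * b := by rw [h1, one_mul]
          nlinarith [sq_nonneg (r * a - r⁻¹ * b), h2]
      _ = _ := by
          rw [Finset.sum_add_distrib, ← Finset.mul_sum, ← Finset.mul_sum]
  have hcP : ∀ (F : Finset ℕ) (k : Fin N × Fin N),
      Continuous fun θ : ℝ => ∑ n ∈ F, E k n * Complex.exp (-(Complex.I * n * θ)) := by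
    intro F k
    exact continuous_finset_sum _ fun n _ => by fun_prop
  have hi1 : IntegrableOn (fun θ : ℝ => ‖∑ n ∈ S, ∑ m ∈ M, A (n, m) *
      Complex.exp (Complex.I * (((n : ℤ) - (m : ℤ) : ℤ) : ℂ) * θ)‖)
      (Set.Ico 0 (2 * Real.pi)) volume := by
    refine contIntegrableIco ?_
    refine Continuous.norm (continuous_finset_sum _ fun n _ => continuous_finset_sum _
      fun m _ => by fun_prop)
  have hiS : IntegrableOn (fun θ : ℝ =>
      ∑ k, ‖∑ n ∈ S, E k n * Complex.exp (-(Complex.I * n * θ))‖ ^ 2)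
      (Set.Ico 0 (2 * Real.pi)) volume := by
    refine contIntegrableIco (continuous_finset_sum _ fun k _ => ?_)
    exact ((hcP S k).norm).pow 2
  have hiM : IntegrableOn (fun θ : ℝ =>
      ∑ k, ‖∑ m ∈ M, E k m * Complex.exp (-(Complex.I * m * θ))‖ ^ 2)
      (Set.Ico 0 (2 * Real.pi)) volume := by
    refine contIntegrableIco (continuous_finset_sum _ fun k _ => ?_)
    exact ((hcP M k).norm).pow 2
  calc ∫ θ in Set.Ico 0 (2 * Real.pi), ‖∑ n ∈ S, ∑ m ∈ M, A (n, m) *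
          Complex.exp (Complex.I * (((n : ℤ) - (m : ℤ) : ℤ) : ℂ) * θ)‖
      ≤ ∫ θ in Set.Ico 0 (2 * Real.pi),
          (r ^ 2 / 2 * (∑ k, ‖∑ n ∈ S, E k n * Complex.exp (-(Complex.I * n * θ))‖ ^ 2)
          + r⁻¹ ^ 2 / 2 *
            (∑ k, ‖∑ m ∈ M, E k m * Complex.exp (-(Complex.I * m * θ))‖ ^ 2)) := by
        refine MeasureTheory.integral_mono hi1 ?_ hpt
        exact (hiS.const_mul _).add (hiM.const_mul _)
    _ = r ^ 2 / 2 * (2 * Real.pi * ∑ n ∈ S, (A (n, n)).re)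
        + r⁻¹ ^ 2 / 2 * (2 * Real.pi * ∑ m ∈ M, (A (m, m)).re) := by
        rw [MeasureTheory.integral_add (hiS.const_mul _) (hiM.const_mul _),
          MeasureTheory.integral_const_mul, MeasureTheory.integral_const_mul,
          gram_diag_integral hAE hSN, gram_diag_integral hAE hMN]
    _ = Real.pi * (r ^ 2 * ∑ n ∈ S, (A (n, n)).re + r⁻¹ ^ 2 * ∑ m ∈ M, (A (m, m)).re) := by
        ring

end key

lemma integrable_mu {f : ℝ → ℂ} (hf : Continuous f) : Integrable f mu := by
  rw [mu]
  refine (contIntegrableIco hf).smul_measure ENNReal.ofReal_ne_top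

lemma integral_mu_eq {E : Type*} [NormedAddCommGroup E] [NormedSpace ℝ E] (f : ℝ → E) :
    ∫ θ, f θ ∂mu = (2 * Real.pi)⁻¹ • ∫ θ in Set.Ico 0 (2 * Real.pi), f θ := by
  rw [mu, MeasureTheory.integral_smul_measure, ENNReal.toReal_ofReal (by positivity)]

lemma hpart_cont (c T : ℕ × ℕ → ℂ) (s t : ℕ) : Continuous (hpart c T s t) := by
  refine continuous_finset_sum _ fun n _ => continuous_finset_sum _ fun m _ => by fun_prop

lemma master (c T : ℕ × ℕ → ℂ) (hc : IsPhaseMatrix c) (hT : IsStateMatrix T)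
    {s t s' t' : ℕ} (hs : s ≤ s') (ht : t ≤ t') {r : ℝ} (hr : 0 < r) :
    ∫ θ, ‖hpart c T s' t' θ - hpart c T s t θ‖ ∂mu ≤
      2⁻¹ * (r ^ 2 * ((∑ n ∈ Finset.Ico (s + 1) (s' + 1), (T (n, n)).re)
        + (∑ m ∈ Finset.Ico (t + 1) (t' + 1), (T (m, m)).re)) + 2 * r⁻¹ ^ 2) := by
  classical
  set A : ℕ × ℕ → ℂ := fun p => T (p.2, p.1) * c p with hA
  have hg : ∀ N : ℕ, ∃ D : (Fin N × Fin N) → Fin N → ℂ, ∀ i j : Fin N,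
      A ((i : ℕ), (j : ℕ)) = ∑ k, conj (D k i) * D k j := fun N =>
    gram_prod hT.1 hc.2 N
  have hdiagA : ∀ n : ℕ, (A (n, n)).re = (T (n, n)).re := by
    intro n; rw [hA]; simp [hc.1 n]
  have hσ0 : ∀ n : ℕ, 0 ≤ (T (n, n)).re := by
    intro n
    have := (Complex.le_def.mp (psd_diag hT.1 n)).1
    simpa using this
  have hσsum : HasSum (fun n => (T (n, n)).re) 1 := by
    have := hT.2.mapL Complex.reCLM
    simpa using this
  have hσ1 : ∀ F : Finset ℕ, ∑ n ∈ F, (T (n, n)).re ≤ 1 :=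
    fun F => sum_le_hasSum F (fun i _ => hσ0 i) hσsum
  set B1 : ℝ → ℂ := fun θ => ∑ n ∈ Finset.Ico (s + 1) (s' + 1), ∑ m ∈ Finset.range (t' + 1),
    A (n, m) * Complex.exp (Complex.I * (((n : ℤ) - (m : ℤ) : ℤ) : ℂ) * θ) with hB1
  set B2 : ℝ → ℂ := fun θ => ∑ n ∈ Finset.range (s + 1), ∑ m ∈ Finset.Ico (t + 1) (t' + 1),
    A (n, m) * Complex.exp (Complex.I * (((n : ℤ) - (m : ℤ) : ℤ) : ℂ) * θ) with hB2
  have hsplit : ∀ θ : ℝ, hpart c T s' t' θ - hpart c T s t θ = B1 θ + B2 θ := by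
    intro θ
    have e1 : hpart c T s' t' θ = (∑ n ∈ Finset.range (s + 1), ∑ m ∈ Finset.range (t' + 1),
        A (n, m) * Complex.exp (Complex.I * (((n : ℤ) - (m : ℤ) : ℤ) : ℂ) * θ)) + B1 θ := by
      rw [hpart, hB1]
      rw [Finset.range_eq_Ico, ← Finset.sum_Ico_consecutive _ (Nat.zero_le (s + 1))
        (by omega : s + 1 ≤ s' + 1), ← Finset.range_eq_Ico]
    have e2 : (∑ n ∈ Finset.range (s + 1), ∑ m ∈ Finset.range (t' + 1),
        A (n, m) * Complex.exp (Complex.I * (((n : ℤ) - (m : ℤ) : ℤ) : ℂ) * θ))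
        = hpart c T s t θ + B2 θ := by
      rw [hpart, hB2, ← Finset.sum_add_distrib]
      refine Finset.sum_congr rfl fun n _ => ?_
      rw [Finset.range_eq_Ico, ← Finset.sum_Ico_consecutive _ (Nat.zero_le (t + 1))
        (by omega : t + 1 ≤ t' + 1), ← Finset.range_eq_Ico]
    rw [e1, e2]; ring
  have hcB1 : Continuous B1 := continuous_finset_sum _ fun n _ =>
    continuous_finset_sum _ fun m _ => by fun_prop
  have hcB2 : Continuous B2 := continuous_finset_sum _ fun n _ =>
    continuous_finset_sum _ fun m _ => by fun_prop
  have key1 := keyL1 (A := A) hg (Finset.Ico (s + 1) (s' + 1)) (Finset.range (t' + 1)) r hr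
  have key2 := keyL1 (A := A) hg (Finset.range (s + 1)) (Finset.Ico (t + 1) (t' + 1)) r⁻¹
    (inv_pos.mpr hr)
  rw [inv_inv] at key2
  have hhalf : (2 * Real.pi)⁻¹ * Real.pi = 2⁻¹ := by
    rw [mul_inv]
    field_simp [Real.pi_ne_zero]
  have hπ : (0 : ℝ) < (2 * Real.pi)⁻¹ := by positivity
  calc ∫ θ, ‖hpart c T s' t' θ - hpart c T s t θ‖ ∂mu
      = ∫ θ, ‖B1 θ + B2 θ‖ ∂mu := by
        refine MeasureTheory.integral_congr_ae (Eventually.of_forall fun θ => ?_)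
        simp only []
        rw [hsplit θ]
    _ ≤ ∫ θ, (‖B1 θ‖ + ‖B2 θ‖) ∂mu := by
        refine MeasureTheory.integral_mono ((integrable_mu (hcB1.add hcB2)).norm)
          ((integrable_mu hcB1).norm.add ((integrable_mu hcB2).norm))
          (fun θ => norm_add_le _ _)
    _ = (∫ θ, ‖B1 θ‖ ∂mu) + ∫ θ, ‖B2 θ‖ ∂mu :=
        MeasureTheory.integral_add ((integrable_mu hcB1).norm) ((integrable_mu hcB2).norm)
    _ ≤ _ := by
        rw [integral_mu_eq, integral_mu_eq, smul_eq_mul, smul_eq_mul]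
        have b1 : (2 * Real.pi)⁻¹ * (∫ θ in Set.Ico 0 (2 * Real.pi), ‖B1 θ‖)
            ≤ 2⁻¹ * (r ^ 2 * (∑ n ∈ Finset.Ico (s + 1) (s' + 1), (T (n, n)).re) + r⁻¹ ^ 2) := by
          have h2 := (mul_le_mul_of_nonneg_left key1 hπ.le)
          refine h2.trans ?_
          rw [← mul_assoc, hhalf]
          simp only [hdiagA]
          have := hσ1 (Finset.range (t' + 1))
          have hnn : (0 : ℝ) ≤ r⁻¹ ^ 2 := by positivity
          nlinarith [hσ1 (Finset.Ico (s + 1) (s' + 1)),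
            Finset.sum_nonneg (fun n _ => hσ0 n) (s := Finset.Ico (s + 1) (s' + 1))]
        have b2 : (2 * Real.pi)⁻¹ * (∫ θ in Set.Ico 0 (2 * Real.pi), ‖B2 θ‖)
            ≤ 2⁻¹ * (r ^ 2 * (∑ m ∈ Finset.Ico (t + 1) (t' + 1), (T (m, m)).re) + r⁻¹ ^ 2) := by
          have h2 := (mul_le_mul_of_nonneg_left key2 hπ.le)
          refine h2.trans ?_
          rw [← mul_assoc, hhalf]
          simp only [hdiagA]
          have := hσ1 (Finset.range (s + 1))
          have hnn : (0 : ℝ) ≤ r ^ 2 := by positivity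
          nlinarith [hσ1 (Finset.Ico (t + 1) (t' + 1)),
            Finset.sum_nonneg (fun n _ => hσ0 n) (s := Finset.Ico (t + 1) (t' + 1))]
        have := add_le_add b1 b2
        refine this.trans (le_of_eq ?_)
        ring

theorem stmt13 (c T : ℕ × ℕ → ℂ) (hc : IsPhaseMatrix c) (hT : IsStateMatrix T) :
    ∃ g : ℝ → ℂ, Integrable g mu ∧
      Tendsto (fun st : ℕ × ℕ => ∫ θ, ‖hpart c T st.1 st.2 θ - g θ‖ ∂mu)
        atTop (nhds 0) ∧
      ∀ X : Set ℝ, MeasurableSet X → X ⊆ Set.Ico 0 (2 * Real.pi) →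
        Tendsto
          (fun st : ℕ × ℕ => ∑ n ∈ Finset.range (st.1 + 1), ∑ m ∈ Finset.range (st.2 + 1),
            T (m, n) * c (n, m) * ik ((n : ℤ) - m) X)
          atTop (nhds ((2 * Real.pi)⁻¹ * ∫ θ in X, g θ)) := by
  classical
  have hσ0 : ∀ n : ℕ, 0 ≤ (T (n, n)).re := by
    intro n
    have := (Complex.le_def.mp (psd_diag hT.1 n)).1
    simpa using this
  have hσsum : HasSum (fun n => (T (n, n)).re) 1 := by
    have := hT.2.mapL Complex.reCLM
    simpa using this
  have hσ1 : ∀ F : Finset ℕ, ∑ n ∈ F, (T (n, n)).re ≤ 1 :=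
    fun F => sum_le_hasSum F (fun i _ => hσ0 i) hσsum
  have hint : ∀ st : ℕ × ℕ, Integrable (hpart c T st.1 st.2) mu :=
    fun st => integrable_mu (hpart_cont _ _ _ _)
  set F : ℕ × ℕ → (Lp ℂ 1 mu) := fun st => (hint st).toL1 _ with hF
  have hdist : ∀ a b : ℕ × ℕ, dist (F a) (F b)
      = ∫ θ, ‖hpart c T a.1 a.2 θ - hpart c T b.1 b.2 θ‖ ∂mu := by
    intro a b
    rw [hF]
    simp only []
    rw [dist_eq_norm, ← MeasureTheory.Integrable.toL1_sub,
      MeasureTheory.L1.norm_of_fun_eq_integral_norm]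
    rfl
  have hcauchy : CauchySeq F := by
    rw [Metric.cauchySeq_iff']
    intro ε hε
    set r := Real.sqrt (8 / ε) with hrdef
    have hr : 0 < r := Real.sqrt_pos.mpr (by positivity)
    have hr2 : r ^ 2 = 8 / ε := Real.sq_sqrt (by positivity)
    have hrinv : r⁻¹ ^ 2 = ε / 8 := by
      rw [inv_pow, hr2]
      field_simp
    have h2 : ∀ᶠ k in atTop, 1 - ε ^ 2 / 32 < ∑ n ∈ Finset.range k, (T (n, n)).re :=
      hσsum.tendsto_sum_nat.eventually
        (eventually_gt_nhds (by nlinarith [sq_nonneg ε]))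
    obtain ⟨K, hK⟩ := eventually_atTop.mp h2
    set N := K with hNdef
    have hN : 1 - ε ^ 2 / 32 < ∑ n ∈ Finset.range (N + 1), (T (n, n)).re :=
      hK (N + 1) (by omega)
    refine ⟨(N, N), fun ab hab => ?_⟩
    have h1 : N ≤ ab.1 := hab.1
    have h2' : N ≤ ab.2 := hab.2
    rw [hdist]
    refine lt_of_le_of_lt (master c T hc hT h1 h2' hr) ?_
    have tb : ∀ b' : ℕ, N ≤ b' →
        ∑ n ∈ Finset.Ico (N + 1) (b' + 1), (T (n, n)).re < ε ^ 2 / 32 := by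
      intro b' hb
      have hsp : (∑ n ∈ Finset.range (N + 1), (T (n, n)).re)
          + ∑ n ∈ Finset.Ico (N + 1) (b' + 1), (T (n, n)).re
          = ∑ n ∈ Finset.range (b' + 1), (T (n, n)).re := by
        simp only [Finset.range_eq_Ico]
        exact Finset.sum_Ico_consecutive _ (Nat.zero_le _) (by omega)
      have hb1 := hσ1 (Finset.range (b' + 1))
      linarith
    have t1 := tb ab.1 h1
    have t2 := tb ab.2 h2'
    rw [hr2, hrinv]
    have h8 : (0 : ℝ) < 8 / ε := by positivity
    have hmul := mul_lt_mul_of_pos_left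
      (show (∑ n ∈ Finset.Ico (N + 1) (ab.1 + 1), (T (n, n)).re)
        + ∑ n ∈ Finset.Ico (N + 1) (ab.2 + 1), (T (n, n)).re < ε ^ 2 / 16 by linarith) h8
    have hid : 8 / ε * (ε ^ 2 / 16) = ε / 2 := by
      field_simp
      ring
    nlinarith [hmul]
  obtain ⟨G, hG⟩ := cauchySeq_tendsto_of_complete hcauchy
  have hGint : Integrable (⇑G) mu := MeasureTheory.L1.integrable_coeFn G
  have hd : ∀ st : ℕ × ℕ, ∫ θ, ‖hpart c T st.1 st.2 θ - G θ‖ ∂mu = dist (F st) G := by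
    intro st
    conv_rhs => rw [← MeasureTheory.Integrable.toL1_coeFn G hGint]
    rw [hF]
    simp only []
    rw [dist_eq_norm, ← MeasureTheory.Integrable.toL1_sub,
      MeasureTheory.L1.norm_of_fun_eq_integral_norm]
    rfl
  have h0 : Tendsto (fun st : ℕ × ℕ => ∫ θ, ‖hpart c T st.1 st.2 θ - G θ‖ ∂mu)
      atTop (nhds 0) := by
    refine Tendsto.congr (fun st => (hd st).symm) ?_
    exact tendsto_iff_dist_tendsto_zero.mp hG
  refine ⟨⇑G, hGint, h0, ?_⟩
  intro X hXm hXsub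
  have hGIco : IntegrableOn (⇑G) (Set.Ico 0 (2 * Real.pi)) volume := by
    refine (MeasureTheory.integrable_smul_measure ?_ ENNReal.ofReal_ne_top).mp hGint
    simp only [ne_eq, ENNReal.ofReal_eq_zero, not_le]
    positivity
  have hGX : IntegrableOn (⇑G) X volume := hGIco.mono_set hXsub
  have hpartX : ∀ s t : ℕ, IntegrableOn (hpart c T s t) X volume :=
    fun s t => (contIntegrableIco (hpart_cont c T s t)).mono_set hXsub
  have hsum_eq : ∀ st : ℕ × ℕ,
      (∑ n ∈ Finset.range (st.1 + 1), ∑ m ∈ Finset.range (st.2 + 1),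
        T (m, n) * c (n, m) * ik ((n : ℤ) - m) X)
      = (2 * Real.pi)⁻¹ * ∫ θ in X, hpart c T st.1 st.2 θ := by
    intro st
    have hterm : ∀ n m : ℕ, IntegrableOn (fun θ : ℝ =>
        T (m, n) * c (n, m) * Complex.exp (Complex.I * (((n : ℤ) - m : ℤ) : ℂ) * θ))
        X volume :=
      fun n m => (contIntegrableIco (by fun_prop)).mono_set hXsub
    have : ∫ θ in X, hpart c T st.1 st.2 θ
        = ∑ n ∈ Finset.range (st.1 + 1), ∑ m ∈ Finset.range (st.2 + 1),
          T (m, n) * c (n, m) * ∫ θ in X, Complex.exp (Complex.I * (((n : ℤ) - m : ℤ) : ℂ) * θ) := by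
      simp only [hpart]
      rw [MeasureTheory.integral_finset_sum _
        (fun n _ => MeasureTheory.integrable_finset_sum _ (fun m _ => hterm n m))]
      refine Finset.sum_congr rfl fun n _ => ?_
      rw [MeasureTheory.integral_finset_sum _ (fun m _ => hterm n m)]
      exact Finset.sum_congr rfl fun m _ => MeasureTheory.integral_const_mul _ _
    rw [this, Finset.mul_sum]
    refine Finset.sum_congr rfl fun n _ => ?_
    rw [Finset.mul_sum]
    refine Finset.sum_congr rfl fun m _ => ?_
    rw [ik]
    push_cast
    ring
  have hnconst : ‖((((2 * Real.pi)⁻¹ : ℝ)) : ℂ)‖ = (2 * Real.pi)⁻¹ := by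
    rw [Complex.norm_real]
    exact abs_of_pos (by positivity)
  have hbound : ∀ st : ℕ × ℕ,
      dist ((2 * Real.pi)⁻¹ * ∫ θ in X, hpart c T st.1 st.2 θ : ℂ)
        ((2 * Real.pi)⁻¹ * ∫ θ in X, G θ)
      ≤ ∫ θ, ‖hpart c T st.1 st.2 θ - G θ‖ ∂mu := by
    intro st
    have hIntNorm : IntegrableOn (fun θ => ‖hpart c T st.1 st.2 θ - G θ‖)
        (Set.Ico 0 (2 * Real.pi)) volume :=
      (((contIntegrableIco (hpart_cont c T st.1 st.2)).sub hGIco)).norm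
    rw [dist_eq_norm, ← mul_sub, norm_mul]
    rw [← MeasureTheory.integral_sub (hpartX st.1 st.2) hGX]
    calc ‖((((2 * Real.pi)⁻¹ : ℝ)) : ℂ)‖ * ‖∫ θ in X, (hpart c T st.1 st.2 θ - G θ)‖
        ≤ (2 * Real.pi)⁻¹ * ∫ θ in X, ‖hpart c T st.1 st.2 θ - G θ‖ := by
          rw [hnconst]
          exact mul_le_mul_of_nonneg_left (MeasureTheory.norm_integral_le_integral_norm _)
            (by positivity)
      _ ≤ (2 * Real.pi)⁻¹ * ∫ θ in Set.Ico 0 (2 * Real.pi), ‖hpart c T st.1 st.2 θ - G θ‖ := by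
          refine mul_le_mul_of_nonneg_left ?_ (by positivity)
          refine MeasureTheory.setIntegral_mono_set hIntNorm ?_ hXsub.eventuallyLE
          exact Eventually.of_forall fun θ => norm_nonneg _
      _ = ∫ θ, ‖hpart c T st.1 st.2 θ - G θ‖ ∂mu := by
          rw [integral_mu_eq, smul_eq_mul]
  refine tendsto_iff_dist_tendsto_zero.mpr ?_
  refine squeeze_zero (fun st => dist_nonneg) (fun st => ?_) h0
  rw [hsum_eq st]
  exact hbound st
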